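/- arXiv:1607.07955 — 2 statements merged into one kernel-verified Lean document; each statement's English description precedes it below -/
import Mathlib

section
/- For every integer m ≥ 1, the identity ∂_j(∂_i^m(L_m)) = (1 − b)^m·(m)_a!·1 holds in T, where (t)_a = 1 + a + ⋯ + a^{t−1} and (m)_a! = ∏_{t=1}^m (t)_a. -/
noncomputable section

/-- The `ℤⁿ`-degree of a word: the multidegree counting occurrences of each letter. -/
def degw {n : ℕ} (w : FreeMonoid (Fin n)) : Fin n → ℕ :=
  fun k => (FreeMonoid.toList w).count k

/-- The word `u` viewed as an element of the free algebra `T = F⟨x_1,…,x_n⟩`,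
realized as the monoid algebra of the free monoid on `n` letters. -/
def wordOf (F : Type) [Field F] {n : ℕ} (u : FreeMonoid (Fin n)) :
    MonoidAlgebra F (FreeMonoid (Fin n)) :=
  MonoidAlgebra.of F (FreeMonoid (Fin n)) u

/-- `x` is `ℤⁿ`-homogeneous of degree `d`: every word occurring in `x` has degree `d`. -/
def IsHomog (F : Type) [Field F] {n : ℕ}
    (x : MonoidAlgebra F (FreeMonoid (Fin n))) (d : Fin n → ℕ) : Prop :=
  ∀ w ∈ (x.coeff : FreeMonoid (Fin n) →₀ F).support, degw w = d

/-!
Write `a = q_{ii}⁻¹` and `b = q_{ij}⁻¹`. Since `∂_i` lowers the `x_i`-degree by one,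
`∂_i^k L_m` is homogeneous of degree `(m - k) e_i + e_j`, and iterating the twisted Leibniz rule
against `x_i` gives
`∂_i^{k+1}(x_i u) = (k+1)_a ∂_i^k u + a^{k+1} x_i ∂_i^{k+1} u` for every `u`, and
`∂_i^{k+1}(u x_i) = ∂_i^{k+1} u · x_i + b (k+1)_a ∂_i^k u` for `u` of degree `k e_i + e_j`.
By induction `∂_i^m L_m` is a multiple of `x_j`, so `∂_i^{m+1} L_m = 0`, and the two formulas at
`k = m`, `u = L_m` give `∂_i^{m+1} L_{m+1} = (1 - b) (m+1)_a ∂_i^m L_m`. Hence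
`∂_i^m L_m = (1 - b)^m (m)_a! x_j`, and `∂_j x_j = 1`.
-/

open MonoidAlgebra Finset

section

variable {F : Type} [Field F] {n : ℕ}

local notation "T" => MonoidAlgebra F (FreeMonoid (Fin n))
local notation:max "X" k:max => wordOf F (FreeMonoid.of k)

lemma degw_mul (u v : FreeMonoid (Fin n)) : degw (u * v) = degw u + degw v := by
  funext k
  simp [degw, List.count_append]

lemma degw_of (k : Fin n) : degw (FreeMonoid.of k) = Pi.single k 1 := by
  funext l
  rcases eq_or_ne l k with rfl | h
  · simp [degw]
  · simp [degw, h, h.symm]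

lemma wordOf_mul (u v : FreeMonoid (Fin n)) : wordOf F (u * v) = wordOf F u * wordOf F v :=
  map_mul _ u v

lemma wordOf_one : wordOf F (1 : FreeMonoid (Fin n)) = 1 :=
  map_one _

lemma support_coeff_wordOf (w : FreeMonoid (Fin n)) : (wordOf F w).coeff.support = {w} :=
  Finsupp.support_single _ one_ne_zero

lemma isHomog_iff_mem_supported {x : T} {d : Fin n → ℕ} :
    IsHomog F x d ↔ x ∈ supported F F {w | degw w = d} :=
  Iff.rfl

lemma isHomog_wordOf (w : FreeMonoid (Fin n)) : IsHomog F (wordOf F w) (degw w) := by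
  intro v hv
  rw [support_coeff_wordOf, mem_singleton] at hv
  rw [hv]

lemma isHomog_wordOf_of (k : Fin n) : IsHomog F (X k) (Pi.single k 1) :=
  degw_of k ▸ isHomog_wordOf _

lemma IsHomog.mul {x y : T} {d e : Fin n → ℕ} (hx : IsHomog F x d) (hy : IsHomog F y e) :
    IsHomog F (x * y) (d + e) := by
  classical
  intro w hw
  obtain ⟨u, hu, v, hv, rfl⟩ := mem_mul.1 (support_coeff_mul_subset x y hw)
  rw [degw_mul, hx u hu, hy v hv]

lemma IsHomog.sub {x y : T} {d : Fin n → ℕ} (hx : IsHomog F x d) (hy : IsHomog F y d) :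
    IsHomog F (x - y) d :=
  isHomog_iff_mem_supported.2 (sub_mem hx hy)

/-- `δ` satisfies the rules defining `∂_i`, with the twist `∏ k, q_{ik}^{-d_k}` replaced by an
arbitrary function `c` of the degree `d`. -/
structure IsSkewPartialDeriv (δ : Module.End F T) (i : Fin n) (c : (Fin n → ℕ) → F) :
    Prop where
  map_one : δ 1 = 0
  map_of : ∀ k, δ (X k) = if i = k then 1 else 0
  map_mul : ∀ (u v : T) (d : Fin n → ℕ), IsHomog F u d →
    δ (u * v) = δ u * v + c d • (u * δ v)

namespace IsSkewPartialDeriv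

variable {δ : Module.End F (MonoidAlgebra F (FreeMonoid (Fin n)))} {i : Fin n}
  {c : (Fin n → ℕ) → F}

lemma map_of_mul (hδ : IsSkewPartialDeriv δ i c) (k : Fin n) (u : T) :
    δ (X k * u) = (if i = k then u else 0) + c (Pi.single k 1) • (X k * δ u) := by
  rw [hδ.map_mul _ u _ (isHomog_wordOf_of k), hδ.map_of, ite_mul, one_mul, zero_mul]

lemma map_self_mul (hδ : IsSkewPartialDeriv δ i c) (u : T) :
    δ (X i * u) = u + c (Pi.single i 1) • (X i * δ u) := by
  rw [hδ.map_of_mul, if_pos rfl]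

lemma map_mul_self (hδ : IsSkewPartialDeriv δ i c) {u : T} {d : Fin n → ℕ}
    (hu : IsHomog F u d) :
    δ (u * X i) = δ u * X i + c d • u := by
  rw [hδ.map_mul u _ d hu, hδ.map_of, if_pos rfl, mul_one]

-- Not `IsHomog`: `degw w - e_i` does not exist when `x_i` does not occur in `w`.
lemma apply_wordOf_mem_supported (hδ : IsSkewPartialDeriv δ i c) (w : FreeMonoid (Fin n)) :
    δ (wordOf F w) ∈ supported F F {v | degw v + Pi.single i 1 = degw w} := by
  classical
  induction w using FreeMonoid.inductionOn' with
  | one => rw [wordOf_one, hδ.map_one]; exact zero_mem _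
  | of_mul k w ih =>
    rw [wordOf_mul, hδ.map_of_mul]
    refine add_mem ?_ (Submodule.smul_mem _ _ (mem_supported.2 fun v hv => ?_))
    · split_ifs with hik
      · subst hik
        refine mem_supported.2 fun v hv => ?_
        rw [mem_coe, support_coeff_wordOf, mem_singleton] at hv
        rw [Set.mem_ofPred_eq, hv, degw_mul, degw_of, add_comm]
      · exact zero_mem _
    · rw [mem_coe, wordOf, of_apply] at hv
      obtain ⟨v', hv', rfl⟩ := mem_image.1 (support_coeff_single_mul_subset _ _ _ hv)
      rw [Set.mem_ofPred_eq, degw_mul, degw_mul, add_assoc, mem_supported.1 ih hv']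

lemma isHomog_apply (hδ : IsSkewPartialDeriv δ i c) {x : T} {d : Fin n → ℕ}
    (hx : IsHomog F x (d + Pi.single i 1)) :
    IsHomog F (δ x) d := by
  suffices supported F F {w | degw w = d + Pi.single i 1} ≤
      (supported F F {w | degw w = d}).comap δ from this hx
  rw [supported_eq_span_single, Submodule.span_le]
  rintro _ ⟨w, hw, rfl⟩ v hv
  exact add_right_cancel ((hδ.apply_wordOf_mem_supported w hv).trans hw)

lemma iterate_self_mul (hδ : IsSkewPartialDeriv δ i c) (k : ℕ) (u : T) :
    (δ ^ (k + 1)) (X i * u) =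
      (∑ l ∈ range (k + 1), c (Pi.single i 1) ^ l) • (δ ^ k) u +
        c (Pi.single i 1) ^ (k + 1) • (X i * (δ ^ (k + 1)) u) := by
  induction k generalizing u with
  | zero => simp [hδ.map_self_mul]
  | succ k ih =>
    rw [pow_succ, Module.End.mul_apply, hδ.map_self_mul, map_add, map_smul, ← pow_succ, ih,
      ← Module.End.mul_apply, ← pow_succ, ← Module.End.mul_apply, ← pow_succ,
      geom_sum_succ (n := k + 1)]
    module

lemma iterate_mul_self (hδ : IsSkewPartialDeriv δ i c) (k : ℕ) {u : T} {d : Fin n → ℕ}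
    (hu : IsHomog F u (d + Pi.single i k)) :
    (δ ^ (k + 1)) (u * X i) =
      (δ ^ (k + 1)) u * X i + (∑ l ∈ range (k + 1), c (d + Pi.single i l)) • (δ ^ k) u := by
  induction k generalizing u with
  | zero => simpa [hδ.map_mul_self] using hδ.map_mul_self hu
  | succ k ih =>
    have hδu : IsHomog F (δ u) (d + Pi.single i k) :=
      hδ.isHomog_apply (by rwa [add_assoc, ← Pi.single_add])
    rw [pow_succ, Module.End.mul_apply, hδ.map_mul_self hu, map_add, map_smul, ih hδu,
      ← Module.End.mul_apply, ← pow_succ, ← Module.End.mul_apply, ← pow_succ,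
      sum_range_succ _ (k + 1)]
    module

end IsSkewPartialDeriv

def twist (q : Fin n → Fin n → F) (i : Fin n) (d : Fin n → ℕ) : F :=
  ∏ k, (q i k)⁻¹ ^ d k

lemma twist_add (q : Fin n → Fin n → F) (i : Fin n) (d e : Fin n → ℕ) :
    twist q i (d + e) = twist q i d * twist q i e := by
  simp only [twist, Pi.add_apply, pow_add, prod_mul_distrib]

lemma twist_single (q : Fin n → Fin n → F) (i k : Fin n) (p : ℕ) :
    twist q i (Pi.single k p) = (q i k)⁻¹ ^ p := by
  simp [twist, Pi.single_apply]

variable {i j : Fin n} {L : ℕ → MonoidAlgebra F (FreeMonoid (Fin n))}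

lemma isHomog_iterated_commutator (hL0 : L 0 = X j)
    (hLs : ∀ m, L (m + 1) = X i * L m - L m * X i) (m : ℕ) :
    IsHomog F (L m) (Pi.single j 1 + Pi.single i m : Fin n → ℕ) := by
  induction m with
  | zero => rw [hL0, Pi.single_zero, add_zero]; exact isHomog_wordOf_of j
  | succ m ih =>
    rw [hLs, Pi.single_add, ← add_assoc]
    refine IsHomog.sub ?_ (IsHomog.mul ih (isHomog_wordOf_of i))
    rw [add_comm]
    exact IsHomog.mul (isHomog_wordOf_of i) ih

lemma iterate_apply_iterated_commutator {q : Fin n → Fin n → F} {δ : Module.End F T}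
    (hδ : IsSkewPartialDeriv δ i (twist q i)) (hij : i ≠ j) (hL0 : L 0 = X j)
    (hLs : ∀ m, L (m + 1) = X i * L m - L m * X i) (m : ℕ) :
    (δ ^ m) (L m) =
      ((1 - (q i j)⁻¹) ^ m * ∏ t ∈ range m, ∑ l ∈ range (t + 1), (q i i)⁻¹ ^ l) •
        X j := by
  induction m with
  | zero => simp [hL0]
  | succ m ih =>
    have hvanish : (δ ^ (m + 1)) (L m) = 0 := by
      rw [pow_succ', Module.End.mul_apply, ih, map_smul, hδ.map_of, if_neg hij, smul_zero]
    have hsum : ∑ l ∈ range (m + 1), twist q i (Pi.single j 1 + Pi.single i l) =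
        (q i j)⁻¹ * ∑ l ∈ range (m + 1), (q i i)⁻¹ ^ l := by
      simp only [twist_add, twist_single, pow_one, mul_sum]
    rw [hLs, map_sub, hδ.iterate_self_mul,
      hδ.iterate_mul_self m (isHomog_iterated_commutator hL0 hLs m), hvanish, mul_zero, zero_mul,
      hsum, twist_single, pow_one, ih, prod_range_succ]
    module

end

theorem stmt_3_general (F : Type) [Field F] (n : ℕ)
    (q : Fin n → Fin n → F)
    (D : Fin n → Module.End F (MonoidAlgebra F (FreeMonoid (Fin n))))
    (hD1 : ∀ i, D i 1 = 0)
    (hDx : ∀ i k : Fin n, D i (wordOf F (FreeMonoid.of k)) = if i = k then 1 else 0)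
    (hDmul : ∀ (i : Fin n) (u v : MonoidAlgebra F (FreeMonoid (Fin n))) (d : Fin n → ℕ),
      IsHomog F u d →
      D i (u * v) = D i u * v + (∏ k : Fin n, (q i k)⁻¹ ^ d k) • (u * D i v))
    (i j : Fin n) (hij : i ≠ j)
    (L : ℕ → MonoidAlgebra F (FreeMonoid (Fin n)))
    (hL0 : L 0 = wordOf F (FreeMonoid.of j))
    (hLs : ∀ m : ℕ, L (m + 1) =
      wordOf F (FreeMonoid.of i) * L m - L m * wordOf F (FreeMonoid.of i))
    (m : ℕ) :
    D j ((D i ^ m) (L m)) =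
      ((1 - (q i j)⁻¹) ^ m *
          ∏ t ∈ Finset.range m, ∑ l ∈ Finset.range (t + 1), (q i i)⁻¹ ^ l) •
        (1 : MonoidAlgebra F (FreeMonoid (Fin n))) := by
  have hD : ∀ k, IsSkewPartialDeriv (D k) k (twist q k) := fun k => ⟨hD1 k, hDx k, hDmul k⟩
  rw [iterate_apply_iterated_commutator (hD i) hij hL0 hLs m, map_smul, (hD j).map_of,
    if_pos rfl]

/-- `∂_j(∂_i^m(L_m)) = (1 − b)^m (m)_a! · 1` for `m ≥ 1`, where
`a = q_{ii}⁻¹`, `b = q_{ij}⁻¹`, `(t)_a = 1 + a + ⋯ + a^{t−1}`, `(m)_a! = ∏_{t=1}^m (t)_a`,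
`L_0 = x_j` and `L_m = x_i L_{m−1} − L_{m−1} x_i`. -/
theorem stmt_3 (F : Type) [Field F] [CharZero F] (n : ℕ) (hn : 2 ≤ n)
    (q : Fin n → Fin n → F) (hq : ∀ k l, q k l ≠ 0)
    (D : Fin n → Module.End F (MonoidAlgebra F (FreeMonoid (Fin n))))
    (hD1 : ∀ i, D i 1 = 0)
    (hDx : ∀ i k : Fin n, D i (wordOf F (FreeMonoid.of k)) = if i = k then 1 else 0)
    (hDmul : ∀ (i : Fin n) (u v : MonoidAlgebra F (FreeMonoid (Fin n))) (d : Fin n → ℕ),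
      IsHomog F u d →
      D i (u * v) = D i u * v + (∏ k : Fin n, (q i k)⁻¹ ^ d k) • (u * D i v))
    (i j : Fin n) (hij : i ≠ j)
    (L : ℕ → MonoidAlgebra F (FreeMonoid (Fin n)))
    (hL0 : L 0 = wordOf F (FreeMonoid.of j))
    (hLs : ∀ m : ℕ, L (m + 1) =
      wordOf F (FreeMonoid.of i) * L m - L m * wordOf F (FreeMonoid.of i))
    (m : ℕ) (hm : 1 ≤ m) :
    D j ((D i ^ m) (L m)) =
      ((1 - (q i j)⁻¹) ^ m *
          ∏ t ∈ Finset.range m, ∑ l ∈ Finset.range (t + 1), (q i i)⁻¹ ^ l) •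
        (1 : MonoidAlgebra F (FreeMonoid (Fin n))) :=
  stmt_3_general F n q D hD1 hDx hDmul i j hij L hL0 hLs m

end
end

section
/- Every Lyndon word that is standard with respect to R is hard with respect to R. -/
noncomputable section

/-- Lexicographic order on words over the ordered alphabet `x_1 < ⋯ < x_n`. -/
def wlt {n : ℕ} (u v : FreeMonoid (Fin n)) : Prop :=
  List.Lex (· < ·) (FreeMonoid.toList u) (FreeMonoid.toList v)

/-- Lyndon word: nonempty and smaller than every rotation `u₂u₁` coming from a
factorization `u = u₁u₂` into nonempty words. -/
def IsLyndon {n : ℕ} (u : FreeMonoid (Fin n)) : Prop :=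
  u ≠ 1 ∧ ∀ v w : FreeMonoid (Fin n), v ≠ 1 → w ≠ 1 → u = v * w → wlt u (w * v)

/-- `(v, w)` is the Shirshov decomposition of `u`: both factors are Lyndon,
`u = v·w`, and `v` has minimal length among all such factorizations. -/
def IsShirshov {n : ℕ} (u v w : FreeMonoid (Fin n)) : Prop :=
  IsLyndon v ∧ IsLyndon w ∧ u = v * w ∧
    ∀ v' w' : FreeMonoid (Fin n), IsLyndon v' → IsLyndon w' → u = v' * w' →
      FreeMonoid.length v ≤ FreeMonoid.length v'

/-- The bicharacter `χ` determined by `χ(e_k, e_l) = q_{kl}`. -/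
def chiF (F : Type) [Field F] {n : ℕ} (q : Fin n → Fin n → F) (d e : Fin n → ℕ) : F :=
  ∏ k : Fin n, ∏ l : Fin n, q k l ^ (d k * e l)

/-- `u` is standard w.r.t. the quotient `π : T → R`: `π(u)` is not a linear
combination of images of strictly greater words of the same length. -/
def IsStandard (F : Type) [Field F] {n : ℕ} {R : Type} [Ring R] [Algebra F R]
    (π : MonoidAlgebra F (FreeMonoid (Fin n)) →ₐ[F] R) (u : FreeMonoid (Fin n)) : Prop :=
  π (wordOf F u) ∉ Submodule.span F
    { y : R | ∃ w : FreeMonoid (Fin n),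
        FreeMonoid.length w = FreeMonoid.length u ∧ wlt u w ∧ y = π (wordOf F w) }

/-- The kernel of `π` (i.e. the ideal `I`) is homogeneous w.r.t. the length grading:
it contains each length-homogeneous component of each of its elements. -/
def HomogKer (F : Type) [Field F] {n : ℕ} {R : Type} [Ring R] [Algebra F R]
    (π : MonoidAlgebra F (FreeMonoid (Fin n)) →ₐ[F] R) : Prop :=
  ∀ x : MonoidAlgebra F (FreeMonoid (Fin n)), π x = 0 →
    ∀ d : ℕ, π (MonoidAlgebra.ofCoeff (Finsupp.filter (fun w : FreeMonoid (Fin n) => FreeMonoid.length w = d) x.coeff)) = 0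

/-- A Lyndon word `u` is hard w.r.t. `π`: `π([u])` is not a linear combination of
elements `π([u₁]⋯[u_r])` with `r ≥ 1`, each `uᵢ` a Lyndon word with `uᵢ > u`, and
`|u₁| + ⋯ + |u_r| = |u|`. -/
def IsHard (F : Type) [Field F] {n : ℕ} {R : Type} [Ring R] [Algebra F R]
    (π : MonoidAlgebra F (FreeMonoid (Fin n)) →ₐ[F] R)
    (br : FreeMonoid (Fin n) → MonoidAlgebra F (FreeMonoid (Fin n)))
    (u : FreeMonoid (Fin n)) : Prop :=
  π (br u) ∉ Submodule.span F
    { y : R | ∃ L : List (FreeMonoid (Fin n)), L ≠ [] ∧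
        (∀ v ∈ L, IsLyndon v ∧ wlt u v) ∧
        (L.map FreeMonoid.length).sum = FreeMonoid.length u ∧
        y = π ((L.map br).prod) }

/-!
Along Shirshov decompositions one shows by induction that `[u] = c • u + (words > u of length
|u|)` with `c ≠ 0`: for `u = v w`, the term `[w][v]` only involves words `≥ w v > u`, while
`-p_{wv} [v][w]` contributes `-p_{wv} c_v c_w • v w`. A product `[u₁]⋯[u_r]` with all `uᵢ > u` and
`∑ |uᵢ| = |u|` only involves words `≥ u₁⋯u_r > u`. So if `π [u]` were a combination of images of
such products, `π u` would be a combination of images of larger words of the same length, and `u`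
would not be standard.

Shirshov decompositions exist because, for the least proper suffix `w` of a Lyndon word `u = v w`,
both `v` and `w` are Lyndon.
-/

namespace List

variable {α : Type*} [LinearOrder α]

theorem isPrefix_or_forall_append_lt_append {a b : List α} (h : a < b) :
    a <+: b ∨ ∀ s t : List α, a ++ s < b ++ t := by
  have h' : Lex (· < ·) a b := h
  clear h
  induction h' with
  | nil => exact .inl nil_prefix
  | rel h => exact .inr fun _ _ => .rel h
  | cons _ ih => exact ih.imp (prefix_cons_inj _).mpr fun h s t => .cons (h s t)

theorem append_lt_append_of_lt_of_length_le {a b : List α} (h : a < b)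
    (hlen : b.length ≤ a.length) (s t : List α) : a ++ s < b ++ t :=
  (isPrefix_or_forall_append_lt_append h).resolve_left
    (fun hp => h.ne (hp.eq_of_length (le_antisymm hp.length_le hlen))) s t

theorem append_lt_append_left_iff {a b : List α} : ∀ {c : List α}, c ++ a < c ++ b ↔ a < b
  | [] => Iff.rfl
  | _ :: _ => cons_lt_cons_self.trans append_lt_append_left_iff

end List

section Words

variable {n : ℕ}

open FreeMonoid

theorem wlt_iff {u v : FreeMonoid (Fin n)} : wlt u v ↔ toList u < toList v := Iff.rfl

theorem wlt_mul_left_iff {a b c : FreeMonoid (Fin n)} : wlt (c * a) (c * b) ↔ wlt a b := by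
  simp only [wlt_iff, toList_mul, List.append_lt_append_left_iff]

theorem wlt_mul_right {a b : FreeMonoid (Fin n)} (h : wlt a b) (t : FreeMonoid (Fin n)) :
    wlt a (b * t) :=
  List.Lex.append_right _ _ h

theorem wlt_mul_mul_of_length_le {a b : FreeMonoid (Fin n)} (h : wlt a b)
    (hlen : length b ≤ length a) (s t : FreeMonoid (Fin n)) : wlt (a * s) (b * t) :=
  List.append_lt_append_of_lt_of_length_le h hlen _ _

theorem length_pos_of_ne_one {α : Type*} {u : FreeMonoid α} (hu : u ≠ 1) : 0 < length u :=
  Nat.pos_of_ne_zero (mt length_eq_zero.mp hu)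

theorem IsLyndon.wlt_of_eq_mul {u v w : FreeMonoid (Fin n)} (hu : IsLyndon u) (hv : v ≠ 1)
    (hw : w ≠ 1) (huvw : u = v * w) : wlt u w := by
  have hlen : length u = length v + length w := by rw [huvw, length_mul]
  have hv₀ := length_pos_of_ne_one hv
  rcases lt_trichotomy (toList u) (toList w) with h | h | h
  · exact h
  · have : length u = length w := congrArg List.length h
    omega
  · exfalso
    have hrot : wlt u (w * v) := hu.2 v w hv hw huvw
    rcases List.isPrefix_or_forall_append_lt_append h with ⟨t, ht⟩ | hsep
    · have hut : u = w * ofList t := toList.injective ht.symm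
      -- the rotation `w v` of `u = w t` gives `t < v`, so the rotation `t w` is `< v w = u`
      have ht₀ : ofList t ≠ 1 := fun h1 => by
        rw [h1, mul_one] at hut
        rw [hut] at hlen
        omega
      have htv : wlt (ofList t) v := wlt_mul_left_iff.mp (hut ▸ hrot)
      have htlen : length (ofList t) = length v := by
        have := congrArg length hut; rw [length_mul] at this; omega
      exact lt_asymm (α := List (Fin n)) (hu.2 w _ hw ht₀ hut)
        (huvw ▸ wlt_mul_mul_of_length_le htv htlen.ge w w)
    · exact lt_asymm hrot (by simpa using hsep (toList v) [])

theorem isLyndon_of_forall_wlt_suffix {u : FreeMonoid (Fin n)} (hu : u ≠ 1)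
    (h : ∀ v w, v ≠ 1 → w ≠ 1 → u = v * w → wlt u w) : IsLyndon u :=
  ⟨hu, fun v w hv hw huvw => wlt_mul_right (h v w hv hw huvw) v⟩

def properSuffixes {α : Type*} (u : FreeMonoid α) : Set (FreeMonoid α) :=
  {w | ∃ v, v ≠ 1 ∧ w ≠ 1 ∧ u = v * w}

theorem finite_properSuffixes {α : Type*} (u : FreeMonoid α) : (properSuffixes u).Finite := by
  refine Set.Finite.of_finite_image ((List.finite_toSet (toList u).tails).subset ?_)
    toList.injective.injOn
  rintro _ ⟨w, ⟨v, -, -, rfl⟩, rfl⟩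
  exact (List.mem_tails _ _).mpr ⟨toList v, rfl⟩

theorem nonempty_properSuffixes {α : Type*} {u : FreeMonoid α} (h2 : 2 ≤ length u) :
    (properSuffixes u).Nonempty := by
  obtain ⟨x, l, hl⟩ := List.exists_cons_of_length_pos (zero_lt_two.trans_le h2)
  refine ⟨ofList l, of x, of_ne_one x, fun h => ?_, toList.injective hl⟩
  have : length u = length (ofList l) + 1 := congrArg List.length hl
  rw [h, length_one] at this
  omega

theorem isLyndon_of_forall_le_properSuffixes {u v w : FreeMonoid (Fin n)} (hv : v ≠ 1)
    (hw : w ≠ 1) (huvw : u = v * w) (hmin : ∀ b ∈ properSuffixes u, toList w ≤ toList b) :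
    IsLyndon w := by
  refine isLyndon_of_forall_wlt_suffix hw fun a b ha hb hab => ?_
  have hb_suffix : b ∈ properSuffixes u :=
    ⟨v * a, fun h => hv (mul_eq_one'.mp h).1, hb, by rw [huvw, hab, mul_assoc]⟩
  refine lt_of_le_of_ne (hmin b hb_suffix) fun h => ?_
  have : length w = length b := congrArg List.length h
  rw [hab, length_mul] at this
  have := length_pos_of_ne_one ha
  omega

theorem IsLyndon.isLyndon_left_of_forall_le_properSuffixes {u v w : FreeMonoid (Fin n)}
    (hu : IsLyndon u) (hv : v ≠ 1) (huvw : u = v * w)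
    (hmin : ∀ b ∈ properSuffixes u, toList w ≤ toList b) : IsLyndon v := by
  refine isLyndon_of_forall_wlt_suffix hv fun a b ha hb hab => ?_
  have ha₀ := length_pos_of_ne_one ha
  have hsuf : wlt (a * b * w) (b * w) := by
    rw [← hab, ← huvw]
    exact hu.wlt_of_eq_mul ha (fun h => hb (mul_eq_one'.mp h).1) (by rw [huvw, hab, mul_assoc])
  rw [hab]
  rcases lt_trichotomy (toList (a * b)) (toList b) with h | h | h
  · exact h
  · have : length (a * b) = length b := congrArg List.length h
    rw [length_mul] at this
    omega
  · exfalso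
    rcases List.isPrefix_or_forall_append_lt_append h with ⟨c, hc⟩ | hsep
    · -- `a b = b c`, and then `c w` is a proper suffix of `u` below `w`
      have habc : a * b = b * ofList c := toList.injective hc.symm
      have hc₀ : ofList c ≠ 1 := fun h1 => by
        have := congrArg length habc
        rw [h1, mul_one, length_mul] at this
        omega
      have hcw : ofList c * w ∈ properSuffixes u :=
        ⟨b, hb, fun h => hc₀ (mul_eq_one'.mp h).1, by rw [huvw, hab, habc, mul_assoc]⟩
      rw [habc, mul_assoc, wlt_mul_left_iff] at hsuf
      exact not_lt_of_ge (hmin _ hcw) hsuf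
    · exact lt_asymm (α := List (Fin n)) hsuf (hsep (toList w) (toList w))

theorem IsLyndon.exists_isLyndon_mul {u : FreeMonoid (Fin n)} (hu : IsLyndon u)
    (h2 : 2 ≤ length u) : ∃ v w, IsLyndon v ∧ IsLyndon w ∧ u = v * w := by
  obtain ⟨w, ⟨v, hv, hw, huvw⟩, hmin⟩ :=
    (properSuffixes u).exists_min_image toList (finite_properSuffixes u)
      (nonempty_properSuffixes h2)
  exact ⟨v, w, hu.isLyndon_left_of_forall_le_properSuffixes hv huvw hmin,
    isLyndon_of_forall_le_properSuffixes hv hw huvw hmin, huvw⟩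

theorem IsLyndon.exists_isShirshov {u : FreeMonoid (Fin n)} (hu : IsLyndon u)
    (h2 : 2 ≤ length u) : ∃ v w, IsShirshov u v w := by
  classical
  have hex : ∃ m v w, IsLyndon v ∧ IsLyndon w ∧ u = v * w ∧ length v = m := by
    obtain ⟨v, w, hv, hw, huvw⟩ := hu.exists_isLyndon_mul h2
    exact ⟨_, v, w, hv, hw, huvw, rfl⟩
  obtain ⟨v, w, hv, hw, huvw, hlen⟩ := Nat.find_spec hex
  exact ⟨v, w, hv, hw, huvw, fun v' w' hv' hw' huvw' =>
    hlen ▸ Nat.find_min' hex ⟨v', w', hv', hw', huvw', rfl⟩⟩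

theorem length_list_prod {α : Type*} (L : List (FreeMonoid α)) :
    length L.prod = (L.map length).sum := by
  induction L with
  | nil => rfl
  | cons a L ih => rw [List.prod_cons, length_mul, ih, List.map_cons, List.sum_cons]

theorem wlt_list_prod {u : FreeMonoid (Fin n)} {L : List (FreeMonoid (Fin n))} (hL : L ≠ [])
    (hgt : ∀ v ∈ L, wlt u v) (hlen : (L.map length).sum = length u) : wlt u L.prod := by
  obtain ⟨v, L, rfl⟩ := List.exists_cons_of_ne_nil hL
  have hv : length v ≤ length u := by
    rw [← hlen, List.map_cons, List.sum_cons]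
    exact Nat.le_add_right _ _
  simpa using wlt_mul_mul_of_length_le (hgt v List.mem_cons_self) hv 1 L.prod

end Words

section WordSpans

open FreeMonoid Submodule
open scoped Pointwise

variable (F : Type) [Field F] {n : ℕ}

local notation "T" => MonoidAlgebra F (FreeMonoid (Fin n))

def spanWordsGE (u : FreeMonoid (Fin n)) : Submodule F T :=
  span F (wordOf F '' {w | length w = length u ∧ toList u ≤ toList w})

def spanWordsGT (u : FreeMonoid (Fin n)) : Submodule F T :=
  span F (wordOf F '' {w | length w = length u ∧ wlt u w})

variable {F}

theorem span_wordOf_mul_span_wordOf_le {S S' S'' : Set (FreeMonoid (Fin n))}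
    (h : S * S' ⊆ S'') :
    span F (wordOf F '' S) * span F (wordOf F '' S') ≤ span F (wordOf F '' S'') := by
  rw [span_mul_span]
  refine span_mono ?_
  calc wordOf F '' S * wordOf F '' S' = wordOf F '' (S * S') :=
        (Set.image_mul (m := MonoidAlgebra.of F (FreeMonoid (Fin n)))).symm
    _ ⊆ wordOf F '' S'' := Set.image_mono h

theorem wordOf_mem_spanWordsGE (u : FreeMonoid (Fin n)) : wordOf F u ∈ spanWordsGE F u :=
  subset_span ⟨u, ⟨rfl, le_rfl⟩, rfl⟩

theorem spanWordsGT_le_spanWordsGE (u : FreeMonoid (Fin n)) :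
    spanWordsGT F u ≤ spanWordsGE F u :=
  span_mono (Set.image_mono fun _ hw => ⟨hw.1, le_of_lt hw.2⟩)

theorem spanWordsGE_le_spanWordsGT {u u' : FreeMonoid (Fin n)} (h : wlt u u')
    (hlen : length u' = length u) : spanWordsGE F u' ≤ spanWordsGT F u :=
  span_mono (Set.image_mono fun _ hw => ⟨hw.1.trans hlen, lt_of_lt_of_le h hw.2⟩)

theorem spanWordsGE_mul_le (a b : FreeMonoid (Fin n)) :
    spanWordsGE F a * spanWordsGE F b ≤ spanWordsGE F (a * b) := by
  refine span_wordOf_mul_span_wordOf_le ?_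
  rintro _ ⟨w₁, ⟨hl₁, h₁⟩, w₂, ⟨hl₂, h₂⟩, rfl⟩
  refine ⟨by simp only [length_mul, hl₁, hl₂], ?_⟩
  rcases h₁.lt_or_eq with h₁ | h₁
  · exact le_of_lt (wlt_mul_mul_of_length_le h₁ hl₁.le b w₂)
  · rw [toList.injective h₁]
    rcases h₂.lt_or_eq with h₂ | h₂
    · exact le_of_lt (wlt_mul_left_iff.mpr h₂)
    · rw [toList.injective h₂]

theorem spanWordsGT_mul_spanWordsGE_le (a b : FreeMonoid (Fin n)) :
    spanWordsGT F a * spanWordsGE F b ≤ spanWordsGT F (a * b) := by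
  refine span_wordOf_mul_span_wordOf_le ?_
  rintro _ ⟨w₁, ⟨hl₁, h₁⟩, w₂, ⟨hl₂, -⟩, rfl⟩
  exact ⟨by simp only [length_mul, hl₁, hl₂], wlt_mul_mul_of_length_le h₁ hl₁.le b w₂⟩

theorem spanWordsGE_mul_spanWordsGT_le (a b : FreeMonoid (Fin n)) :
    spanWordsGE F a * spanWordsGT F b ≤ spanWordsGT F (a * b) := by
  refine span_wordOf_mul_span_wordOf_le ?_
  rintro _ ⟨w₁, ⟨hl₁, h₁⟩, w₂, ⟨hl₂, h₂⟩, rfl⟩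
  refine ⟨by simp only [length_mul, hl₁, hl₂], ?_⟩
  rcases h₁.lt_or_eq with h₁ | h₁
  · exact wlt_mul_mul_of_length_le h₁ hl₁.le b w₂
  · rwa [toList.injective h₁, wlt_mul_left_iff]

theorem mem_spanWordsGE_of_sub_smul_mem {x : T} {c : F} {u : FreeMonoid (Fin n)}
    (hx : x - c • wordOf F u ∈ spanWordsGT F u) : x ∈ spanWordsGE F u := by
  simpa using add_mem (spanWordsGT_le_spanWordsGE u hx)
    (smul_mem _ c (wordOf_mem_spanWordsGE u))

theorem mul_sub_smul_mem_spanWordsGT {x y : T} {a b : F} {u v : FreeMonoid (Fin n)}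
    (hx : x - a • wordOf F u ∈ spanWordsGT F u) (hy : y - b • wordOf F v ∈ spanWordsGT F v) :
    x * y - (a * b) • wordOf F (u * v) ∈ spanWordsGT F (u * v) := by
  have hsplit : x * y - (a * b) • wordOf F (u * v) =
      (x - a • wordOf F u) * y + a • (wordOf F u * (y - b • wordOf F v)) := by
    rw [wordOf, map_mul]
    simp only [mul_sub, sub_mul, smul_sub, mul_smul_comm, smul_mul_assoc, smul_smul]
    abel
  rw [hsplit]
  exact add_mem
    (spanWordsGT_mul_spanWordsGE_le u v (mul_mem_mul hx (mem_spanWordsGE_of_sub_smul_mem hy)))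
    (smul_mem _ a
      (spanWordsGE_mul_spanWordsGT_le u v (mul_mem_mul (wordOf_mem_spanWordsGE u) hy)))

theorem list_prod_mem_spanWordsGE {L : List (FreeMonoid (Fin n))}
    {f : FreeMonoid (Fin n) → MonoidAlgebra F (FreeMonoid (Fin n))}
    (hf : ∀ v ∈ L, f v ∈ spanWordsGE F v) : (L.map f).prod ∈ spanWordsGE F L.prod := by
  induction L with
  | nil =>
    have h1 := wordOf_mem_spanWordsGE (F := F) (1 : FreeMonoid (Fin n))
    rwa [wordOf, map_one] at h1
  | cons v L ih =>
    simp only [List.map_cons, List.prod_cons]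
    exact spanWordsGE_mul_le v L.prod (mul_mem_mul (hf v List.mem_cons_self)
      (ih fun w hw => hf w (List.mem_cons_of_mem v hw)))

theorem isStandard_iff {R : Type} [Ring R] [Algebra F R]
    (π : MonoidAlgebra F (FreeMonoid (Fin n)) →ₐ[F] R) (u : FreeMonoid (Fin n)) :
    IsStandard F π u ↔ π (wordOf F u) ∉ (spanWordsGT F u).map π.toLinearMap := by
  rw [IsStandard, spanWordsGT, map_span, ← Set.image_comp]
  congr! 3
  ext y
  simp [eq_comm, and_assoc]

end WordSpans

section Brackets

open FreeMonoid Submodule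

variable {F : Type} [Field F] {n : ℕ}

theorem chiF_ne_zero {q : Fin n → Fin n → F} (hq : ∀ k l, q k l ≠ 0) (d e : Fin n → ℕ) :
    chiF F q d e ≠ 0 :=
  Finset.prod_ne_zero_iff.mpr fun k _ =>
    Finset.prod_ne_zero_iff.mpr fun l _ => pow_ne_zero _ (hq k l)

theorem exists_bracket_sub_smul_mem_spanWordsGT (q : Fin n → Fin n → F)
    (hq : ∀ k l, q k l ≠ 0)
    (br : FreeMonoid (Fin n) → MonoidAlgebra F (FreeMonoid (Fin n)))
    (hbr1 : ∀ k : Fin n, br (FreeMonoid.of k) = wordOf F (FreeMonoid.of k))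
    (hbr2 : ∀ u v w : FreeMonoid (Fin n), IsLyndon u → 2 ≤ FreeMonoid.length u →
      IsShirshov u v w →
      br u = br w * br v - chiF F q (degw w) (degw v) • (br v * br w))
    {u : FreeMonoid (Fin n)} (hu : IsLyndon u) :
    ∃ c : F, c ≠ 0 ∧ br u - c • wordOf F u ∈ spanWordsGT F u := by
  induction hN : length u using Nat.strong_induction_on generalizing u with
  | _ N ih =>
  rcases lt_or_ge N 2 with h1 | h2
  · have hlen : length u = 1 := by have := length_pos_of_ne_one hu.1; omega
    obtain ⟨k, rfl⟩ := length_eq_one.mp hlen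
    exact ⟨1, one_ne_zero, by simp [hbr1]⟩
  obtain ⟨v, w, hsh⟩ := hu.exists_isShirshov (hN ▸ h2)
  obtain ⟨hv, hw, rfl, -⟩ := id hsh
  have hv₀ := length_pos_of_ne_one hv.1
  have hw₀ := length_pos_of_ne_one hw.1
  have hN' := hN
  rw [length_mul] at hN'
  obtain ⟨cv, hcv, hv_lead⟩ := ih _ (by omega) hv rfl
  obtain ⟨cw, hcw, hw_lead⟩ := ih _ (by omega) hw rfl
  set p := chiF F q (degw w) (degw v)
  refine ⟨-(p * (cv * cw)), by simp [p, chiF_ne_zero hq, hcv, hcw], ?_⟩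
  have hwv : br w * br v ∈ spanWordsGT F (v * w) :=
    spanWordsGE_le_spanWordsGT (hu.2 v w hv.1 hw.1 rfl) (by simp only [length_mul]; omega)
      (spanWordsGE_mul_le w v (mul_mem_mul (mem_spanWordsGE_of_sub_smul_mem hw_lead)
        (mem_spanWordsGE_of_sub_smul_mem hv_lead)))
  have hvw := mul_sub_smul_mem_spanWordsGT hv_lead hw_lead
  rw [hbr2 _ v w hu (by omega) hsh]
  convert sub_mem hwv (smul_mem _ p hvw) using 1
  module

end Brackets

theorem stmt_11_general (F : Type) [Field F] (n : ℕ)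
    (q : Fin n → Fin n → F) (hq : ∀ k l, q k l ≠ 0)
    (R : Type) [Ring R] [Algebra F R]
    (π : MonoidAlgebra F (FreeMonoid (Fin n)) →ₐ[F] R)
    (br : FreeMonoid (Fin n) → MonoidAlgebra F (FreeMonoid (Fin n)))
    (hbr1 : ∀ k : Fin n, br (FreeMonoid.of k) = wordOf F (FreeMonoid.of k))
    (hbr2 : ∀ u v w : FreeMonoid (Fin n), IsLyndon u → 2 ≤ FreeMonoid.length u →
      IsShirshov u v w →
      br u = br w * br v - chiF F q (degw w) (degw v) • (br v * br w))
    (u : FreeMonoid (Fin n)) (hu : IsLyndon u) (hstd : IsStandard F π u) :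
    IsHard F π br u := by
  have hlead := fun {v} (hv : IsLyndon v) =>
    exists_bracket_sub_smul_mem_spanWordsGT q hq br hbr1 hbr2 hv
  obtain ⟨c, hc, hu_lead⟩ := hlead hu
  set S := (spanWordsGT F u).map π.toLinearMap
  intro hhard
  have hbr_mem : π (br u) ∈ S := by
    refine Submodule.span_le.mpr ?_ hhard
    rintro _ ⟨L, hL, hLyn, hlen, rfl⟩
    have hprod := list_prod_mem_spanWordsGE fun v hv => by
      obtain ⟨_, -, hv_lead⟩ := hlead (hLyn v hv).1
      exact mem_spanWordsGE_of_sub_smul_mem hv_lead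
    exact Submodule.mem_map_of_mem <| spanWordsGE_le_spanWordsGT
      (wlt_list_prod hL (fun v hv => (hLyn v hv).2) hlen)
      ((length_list_prod L).trans hlen) hprod
  have hcu : c • π (wordOf F u) ∈ S := by
    simpa using S.sub_mem hbr_mem (Submodule.mem_map_of_mem (f := π.toLinearMap) hu_lead)
  exact (isStandard_iff π u).mp hstd ((S.smul_mem_iff hc).mp hcu)

/-- every Lyndon word that is standard w.r.t. `R` is hard w.r.t. `R`. -/
theorem stmt_11 (F : Type) [Field F] [CharZero F] (n : ℕ) (hn : 1 ≤ n)
    (q : Fin n → Fin n → F) (hq : ∀ k l, q k l ≠ 0)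
    (R : Type) [Ring R] [Algebra F R]
    (π : MonoidAlgebra F (FreeMonoid (Fin n)) →ₐ[F] R)
    (hπ : Function.Surjective π) (hI : HomogKer F π)
    (br : FreeMonoid (Fin n) → MonoidAlgebra F (FreeMonoid (Fin n)))
    (hbr1 : ∀ k : Fin n, br (FreeMonoid.of k) = wordOf F (FreeMonoid.of k))
    (hbr2 : ∀ u v w : FreeMonoid (Fin n), IsLyndon u → 2 ≤ FreeMonoid.length u →
      IsShirshov u v w →
      br u = br w * br v - chiF F q (degw w) (degw v) • (br v * br w))
    (u : FreeMonoid (Fin n)) (hu : IsLyndon u) (hstd : IsStandard F π u) :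
    IsHard F π br u :=
  stmt_11_general F n q hq R π br hbr1 hbr2 u hu hstd

end
end
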